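/- arXiv:1411.1701 — 3 statements merged into one kernel-verified Lean document; each statement's English description precedes it below -/
import Mathlib

section
/- Let O ≠ F be two vertices of a (possibly degenerate) 2×n transportation polytope P(u,v) such that |supp(F)| = n. Then there exists a feasible maximal circuit walk from O to F of length at most |supp(O) \ supp(F)| − 1. -/
/-- The m×n transportation polytope with margins u, v. -/
def TP (m n : ℕ) (u : Fin m → ℝ) (v : Fin n → ℝ) : Set (Matrix (Fin m) (Fin n) ℝ) :=
  {y | (∀ i j, 0 ≤ y i j) ∧ (∀ i, ∑ j, y i j = u i) ∧ (∀ j, ∑ i, y i j = v j)}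

/-- A circuit of the m×n transportation problem. -/
def IsCircuit (m n : ℕ) (g : Matrix (Fin m) (Fin n) ℝ) : Prop :=
  g ≠ 0 ∧ (∀ i, ∑ j, g i j = 0) ∧ (∀ j, ∑ i, g i j = 0) ∧
    ∀ h : Matrix (Fin m) (Fin n) ℝ, h ≠ 0 → (∀ i, ∑ j, h i j = 0) →
      (∀ j, ∑ i, h i j = 0) →
      {p : Fin m × Fin n | h p.1 p.2 ≠ 0} ⊆ {p : Fin m × Fin n | g p.1 p.2 ≠ 0} →
      {p : Fin m × Fin n | h p.1 p.2 ≠ 0} = {p : Fin m × Fin n | g p.1 p.2 ≠ 0}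

/-- The support of a matrix: the set of positions with positive entry. -/
noncomputable def suppF (m n : ℕ) (y : Matrix (Fin m) (Fin n) ℝ) : Finset (Fin m × Fin n) :=
  Finset.univ.filter (fun p => 0 < y p.1 p.2)

/-- A feasible maximal circuit walk of length k from y 0 to y k in the m×n
transportation polytope: all points are feasible, each step applies a circuit with a
positive step length, and each step length is maximal subject to feasibility. -/
def FMCircuitWalk (m n : ℕ) (u : Fin m → ℝ) (v : Fin n → ℝ) (k : ℕ)
    (y : ℕ → Matrix (Fin m) (Fin n) ℝ) : Prop :=
  (∀ i ≤ k, y i ∈ TP m n u v) ∧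
  ∀ i < k, ∃ g : Matrix (Fin m) (Fin n) ℝ, ∃ α : ℝ,
    IsCircuit m n g ∧ 0 < α ∧ y (i + 1) = y i + α • g ∧
    ∀ β : ℝ, α < β → y i + β • g ∉ TP m n u v

/-!
Every column of `F` has exactly one positive entry. A feasible `y ≠ F` has the same first row
sum as `F`, so it exceeds `F` at some `(0, j)` and at some `(1, j')`, and there `F` vanishes.
The circuit moving mass from `(0, j)` and `(1, j')` to `(0, j')` and `(1, j)`, taken with maximal
step length, empties one of these two positions and raises entries only where `F` is positive.
So it strictly shrinks `supp y \ supp F`, a set which has at least two elements as long as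
`y ≠ F`; induction on its size gives a walk of at most `|supp O \ supp F| - 1` steps.
-/

open Finset

section General

variable {m n : ℕ} {u : Fin m → ℝ} {v : Fin n → ℝ}

lemma exists_lt_of_sum_eq_of_ne {ι M : Type*} [Fintype ι] [AddCommMonoid M] [LinearOrder M]
    [IsOrderedCancelAddMonoid M] {f g : ι → M} (hsum : ∑ i, f i = ∑ i, g i) (hne : f ≠ g) :
    ∃ i, f i < g i := by
  by_contra! h
  exact hne <| funext fun i =>
    ((sum_eq_sum_iff_of_le fun i _ => h i).1 hsum.symm i (mem_univ i)).symm

lemma add_smul_mem_TP_iff {y g : Matrix (Fin m) (Fin n) ℝ} (hy : y ∈ TP m n u v)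
    (hrow : ∀ i, ∑ j, g i j = 0) (hcol : ∀ j, ∑ i, g i j = 0) (β : ℝ) :
    y + β • g ∈ TP m n u v ↔ ∀ i j, 0 ≤ y i j + β * g i j := by
  refine ⟨fun h => h.1, fun h => ⟨h, fun i => ?_, fun j => ?_⟩⟩
  · simp [sum_add_distrib, ← mul_sum, hrow, hy.2.1]
  · simp [sum_add_distrib, ← mul_sum, hcol, hy.2.2]

lemma suppF_add_smul_subset (y g : Matrix (Fin m) (Fin n) ℝ) {α : ℝ} (hα : 0 ≤ α) :
    suppF m n (y + α • g) ⊆ suppF m n y ∪ suppF m n g := by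
  intro p hp
  simp only [suppF, mem_union, mem_filter, mem_univ, true_and] at hp ⊢
  simp only [Matrix.add_apply, Matrix.smul_apply, smul_eq_mul] at hp
  by_contra! h
  nlinarith [mul_nonpos_of_nonneg_of_nonpos hα h.2]

lemma eq_of_pos_of_pos_of_card_suppF_le (hv : ∀ j, 0 < v j) {y : Matrix (Fin m) (Fin n) ℝ}
    (hy : y ∈ TP m n u v) (hcard : (suppF m n y).card ≤ n) {i i' : Fin m} {j : Fin n}
    (hi : 0 < y i j) (hi' : 0 < y i' j) : i = i' := by
  have hsurj :
      Set.SurjOn Prod.snd (suppF m n y : Set (Fin m × Fin n)) (univ : Finset (Fin n)) := by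
    intro c _
    obtain ⟨k, -, hk⟩ := exists_lt_of_sum_lt (s := univ) (f := 0) (g := fun k => y k c)
      (by simpa [hy.2.2 c] using hv c)
    exact ⟨(k, c), by simpa [suppF] using hk, rfl⟩
  have hinj := injOn_of_surjOn_of_card_le Prod.snd (fun _ _ => mem_coe.2 (mem_univ _)) hsurj
    (by simpa using hcard)
  exact congrArg Prod.fst (hinj (x₁ := (i, j)) (x₂ := (i', j)) (by simpa [suppF] using hi)
    (by simpa [suppF] using hi') rfl)

lemma fmCircuitWalk_const {y : Matrix (Fin m) (Fin n) ℝ} (hy : y ∈ TP m n u v) :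
    FMCircuitWalk m n u v 0 fun _ => y :=
  ⟨fun _ _ => hy, fun _ hi => absurd hi (Nat.not_lt_zero _)⟩

lemma FMCircuitWalk.exists_cons {k : ℕ} {w : ℕ → Matrix (Fin m) (Fin n) ℝ}
    {x g : Matrix (Fin m) (Fin n) ℝ} {α : ℝ} (hx : x ∈ TP m n u v) (hg : IsCircuit m n g)
    (hα : 0 < α) (hmax : ∀ β, α < β → x + β • g ∉ TP m n u v)
    (hw : FMCircuitWalk m n u v k w) (hw0 : w 0 = x + α • g) :
    ∃ w' : ℕ → Matrix (Fin m) (Fin n) ℝ,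
      w' 0 = x ∧ w' (k + 1) = w k ∧ FMCircuitWalk m n u v (k + 1) w' := by
  refine ⟨fun | 0 => x | i + 1 => w i, rfl, rfl, ?_, ?_⟩
  · rintro (_ | i) hi
    exacts [hx, hw.1 i (by omega)]
  · rintro (_ | i) hi
    exacts [⟨g, α, hg, hα, hw0, hmax⟩, hw.2 i (by omega)]

end General

section TwoRows

variable {n : ℕ} {u : Fin 2 → ℝ} {v : Fin n → ℝ}

lemma col_sum_of_mem_TP_two {y : Matrix (Fin 2) (Fin n) ℝ} (hy : y ∈ TP 2 n u v) (c : Fin n) :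
    y 0 c + y 1 c = v c := by
  simpa [Fin.sum_univ_two] using hy.2.2 c

lemma eq_of_mem_TP_two_of_row_zero_eq {y F : Matrix (Fin 2) (Fin n) ℝ} (hy : y ∈ TP 2 n u v)
    (hF : F ∈ TP 2 n u v) (h : y 0 = F 0) : y = F := by
  ext i c
  fin_cases i
  · exact congrFun h c
  · show y 1 c = F 1 c
    linarith [col_sum_of_mem_TP_two hy c, col_sum_of_mem_TP_two hF c, congrFun h c]

lemma eq_zero_or_eq_zero_of_card_suppF_le (hv : ∀ j, 0 < v j) {F : Matrix (Fin 2) (Fin n) ℝ}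
    (hF : F ∈ TP 2 n u v) (hcard : (suppF 2 n F).card ≤ n) (j : Fin n) :
    F 0 j = 0 ∨ F 1 j = 0 := by
  by_contra! h
  exact zero_ne_one (eq_of_pos_of_pos_of_card_suppF_le hv hF hcard
    ((hF.1 0 j).lt_of_ne' h.1) ((hF.1 1 j).lt_of_ne' h.2))

def transfer (j j' : Fin n) : Matrix (Fin 2) (Fin n) ℝ :=
  Matrix.of ![Pi.single j' 1 - Pi.single j 1, Pi.single j 1 - Pi.single j' 1]

lemma transfer_row_sum (j j' : Fin n) (i : Fin 2) : ∑ c, transfer j j' i c = 0 := by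
  fin_cases i <;> simp [transfer, sum_sub_distrib]

lemma transfer_col_sum (j j' : Fin n) (c : Fin n) : ∑ i, transfer j j' i c = 0 := by
  simp [transfer, Fin.sum_univ_two]

variable {j j' : Fin n}

lemma transfer_apply_of_ne (i : Fin 2) {c : Fin n} (hj : c ≠ j) (hj' : c ≠ j') :
    transfer j j' i c = 0 := by
  fin_cases i <;> simp [transfer, hj, hj']

lemma suppF_transfer_subset (hjj : j ≠ j') : suppF 2 n (transfer j j') ⊆ {(0, j'), (1, j)} := by
  rintro ⟨i, c⟩ hp
  have hpos : 0 < transfer j j' i c := (mem_filter.1 hp).2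
  obtain rfl | hj := eq_or_ne c j
  · fin_cases i <;> simp [transfer, hjj] at hpos ⊢
    linarith
  obtain rfl | hj' := eq_or_ne c j'
  · fin_cases i <;> simp [transfer, hjj.symm] at hpos ⊢
    linarith
  · simp [transfer_apply_of_ne i hj hj'] at hpos

lemma isCircuit_transfer (hjj : j ≠ j') : IsCircuit 2 n (transfer j j') := by
  refine ⟨fun h0 => ?_, transfer_row_sum j j', transfer_col_sum j j',
    fun h hne hrow hcol hsub => ?_⟩
  · simpa [transfer, hjj] using congrFun₂ h0 0 j'
  have hzero : ∀ i c, c ≠ j → c ≠ j' → h i c = 0 := fun i c hj hj' => by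
    by_contra hc
    exact hsub (a := (i, c)) hc (transfer_apply_of_ne i hj hj')
  have hrow' : ∀ i, h i j + h i j' = 0 := fun i => by
    rw [← hrow i, Fintype.sum_eq_add j j' hjj fun c hc => hzero i c hc.1 hc.2]
  have hcol' : ∀ c, h 0 c + h 1 c = 0 := fun c => by simpa [Fin.sum_univ_two] using hcol c
  have hsmul : h = h 0 j' • transfer j j' := by
    ext i c
    obtain rfl | hj := eq_or_ne c j
    · fin_cases i <;> simp [transfer, hjj] <;> linarith [hrow' 0, hcol' c]
    obtain rfl | hj' := eq_or_ne c j'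
    · fin_cases i <;> simp [transfer, hjj.symm]
      linarith [hcol' c]
    · simp [hzero i c hj hj', transfer_apply_of_ne i hj hj']
  have ha : h 0 j' ≠ 0 := fun ha => hne (by rw [hsmul, ha, zero_smul])
  rw [hsmul]
  ext p
  simp [ha]

lemma add_smul_transfer_mem_TP_iff {y : Matrix (Fin 2) (Fin n) ℝ} (hy : y ∈ TP 2 n u v)
    (hjj : j ≠ j') {β : ℝ} (hβ : 0 ≤ β) :
    y + β • transfer j j' ∈ TP 2 n u v ↔ β ≤ y 0 j ∧ β ≤ y 1 j' := by
  rw [add_smul_mem_TP_iff hy (transfer_row_sum j j') (transfer_col_sum j j')]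
  constructor
  · intro h
    have h0 := h 0 j
    have h1 := h 1 j'
    simp [transfer, hjj, hjj.symm] at h0 h1
    constructor <;> linarith
  · rintro ⟨h0, h1⟩ i c
    obtain rfl | hj := eq_or_ne c j
    · fin_cases i <;> simp [transfer, hjj] <;> linarith [hy.1 1 c]
    obtain rfl | hj' := eq_or_ne c j'
    · fin_cases i <;> simp [transfer, hjj.symm] <;> linarith [hy.1 0 c]
    · simpa [transfer_apply_of_ne i hj hj'] using hy.1 i c

lemma exists_maximal_transfer_step {y : Matrix (Fin 2) (Fin n) ℝ} (hy : y ∈ TP 2 n u v)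
    (hjj : j ≠ j') (hj : 0 < y 0 j) (hj' : 0 < y 1 j') :
    ∃ α : ℝ, 0 < α ∧ y + α • transfer j j' ∈ TP 2 n u v ∧
      (∀ β, α < β → y + β • transfer j j' ∉ TP 2 n u v) ∧
      ((0, j) ∉ suppF 2 n (y + α • transfer j j') ∨
        (1, j') ∉ suppF 2 n (y + α • transfer j j')) := by
  have hα : 0 < min (y 0 j) (y 1 j') := lt_min hj hj'
  refine ⟨min (y 0 j) (y 1 j'), hα,
    (add_smul_transfer_mem_TP_iff hy hjj hα.le).2 ⟨min_le_left .., min_le_right ..⟩,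
    fun β hβ hmem => ?_, ?_⟩
  · obtain ⟨h0, h1⟩ := (add_smul_transfer_mem_TP_iff hy hjj (hα.trans hβ).le).1 hmem
    exact hβ.not_ge (le_min h0 h1)
  · rcases le_total (y 0 j) (y 1 j') with hle | hle
    · left
      simp [suppF, transfer, hjj, min_eq_left hle]
    · right
      simp [suppF, transfer, hjj.symm, min_eq_right hle]

lemma exists_transfer_positions_of_ne {F y : Matrix (Fin 2) (Fin n) ℝ} (hF : F ∈ TP 2 n u v)
    (hcol : ∀ j, F 0 j = 0 ∨ F 1 j = 0) (hy : y ∈ TP 2 n u v) (hyF : y ≠ F) :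
    ∃ j j', j ≠ j' ∧ (0, j) ∈ suppF 2 n y \ suppF 2 n F ∧
      (1, j') ∈ suppF 2 n y \ suppF 2 n F ∧ {(0, j'), (1, j)} ⊆ suppF 2 n F := by
  have hrow : y 0 ≠ F 0 := fun h => hyF (eq_of_mem_TP_two_of_row_zero_eq hy hF h)
  have hsum : ∑ c, y 0 c = ∑ c, F 0 c := by rw [hy.2.1 0, hF.2.1 0]
  obtain ⟨j, hj⟩ := exists_lt_of_sum_eq_of_ne hsum.symm hrow.symm
  obtain ⟨j', hj'⟩ := exists_lt_of_sum_eq_of_ne hsum hrow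
  have hF1j : 0 < F 1 j := by
    linarith [col_sum_of_mem_TP_two hy j, col_sum_of_mem_TP_two hF j, hy.1 1 j]
  have hF0j' : 0 < F 0 j' := by
    linarith [col_sum_of_mem_TP_two hy j', col_sum_of_mem_TP_two hF j', hy.1 0 j']
  have hF0j : F 0 j = 0 := (hcol j).resolve_right hF1j.ne'
  have hF1j' : F 1 j' = 0 := (hcol j').resolve_left hF0j'.ne'
  refine ⟨j, j', fun h => by simp [h, hF0j'.ne'] at hF0j, ?_, ?_, ?_⟩
  · simp [suppF, hF0j ▸ hj, hF0j]
  · simp [suppF, hF1j']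
    linarith [col_sum_of_mem_TP_two hy j', col_sum_of_mem_TP_two hF j']
  · simp [insert_subset_iff, suppF, hF0j', hF1j]

theorem exists_fmCircuitWalk_of_eq_zero_or_eq_zero {F : Matrix (Fin 2) (Fin n) ℝ}
    (hF : F ∈ TP 2 n u v) (hcol : ∀ j, F 0 j = 0 ∨ F 1 j = 0)
    (y : Matrix (Fin 2) (Fin n) ℝ) (hy : y ∈ TP 2 n u v) :
    ∃ k ≤ (suppF 2 n y \ suppF 2 n F).card - 1, ∃ w : ℕ → Matrix (Fin 2) (Fin n) ℝ,
      w 0 = y ∧ w k = F ∧ FMCircuitWalk 2 n u v k w := by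
  induction hd : (suppF 2 n y \ suppF 2 n F).card using Nat.strong_induction_on generalizing y
    with | _ d ih => ?_
  obtain rfl | hyF := eq_or_ne y F
  · exact ⟨0, Nat.zero_le _, fun _ => y, rfl, rfl, fmCircuitWalk_const hy⟩
  obtain ⟨j, j', hjj, hp, hq, hFpos⟩ := exists_transfer_positions_of_ne hF hcol hy hyF
  obtain ⟨α, hα, hmem, hmax, hdrop⟩ := exists_maximal_transfer_step hy hjj
    (mem_filter.1 (mem_sdiff.1 hp).1).2 (mem_filter.1 (mem_sdiff.1 hq).1).2
  set y' := y + α • transfer j j'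
  -- the transfer only raises entries at positions where `F` is positive
  have hsub : suppF 2 n y' \ suppF 2 n F ⊆ suppF 2 n y \ suppF 2 n F := by
    intro p hp'
    obtain ⟨hpy', hpF⟩ := mem_sdiff.1 hp'
    exact mem_sdiff.2 ⟨(mem_union.1 (suppF_add_smul_subset y _ hα.le hpy')).resolve_right
      fun hpt => hpF (hFpos (suppF_transfer_subset hjj hpt)), hpF⟩
  have hlt : (suppF 2 n y' \ suppF 2 n F).card < d := by
    refine hd ▸ card_lt_card ((ssubset_iff_of_subset hsub).2 ?_)
    rcases hdrop with h | h
    · exact ⟨_, hp, fun h' => h (mem_sdiff.1 h').1⟩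
    · exact ⟨_, hq, fun h' => h (mem_sdiff.1 h').1⟩
  have htwo : 2 ≤ d := hd ▸ card_le_card (insert_subset hp (singleton_subset_iff.2 hq))
  obtain ⟨k, hk, w, hw0, hwk, hw⟩ := ih _ hlt y' hmem rfl
  obtain ⟨w', hw'0, hw'k, hw'⟩ := hw.exists_cons hy (isCircuit_transfer hjj) hα hmax hw0
  exact ⟨k + 1, by omega, w', hw'0, hw'k.trans hwk, hw'⟩

end TwoRows

theorem stmt_5_general (n : ℕ) (u : Fin 2 → ℝ) (v : Fin n → ℝ)
    (hv : ∀ j, 0 < v j)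
    (O F : Matrix (Fin 2) (Fin n) ℝ)
    (hO : O ∈ Set.extremePoints ℝ (TP 2 n u v))
    (hF : F ∈ Set.extremePoints ℝ (TP 2 n u v))
    (hsF : (suppF 2 n F).card = n) :
    ∃ k ≤ (suppF 2 n O \ suppF 2 n F).card - 1, ∃ y : ℕ → Matrix (Fin 2) (Fin n) ℝ,
      y 0 = O ∧ y k = F ∧ FMCircuitWalk 2 n u v k y :=
  exists_fmCircuitWalk_of_eq_zero_or_eq_zero hF.1
    (eq_zero_or_eq_zero_of_card_suppF_le hv hF.1 hsF.le) O hO.1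

/-- if O ≠ F are vertices of a (possibly degenerate) 2×n transportation
polytope with |supp(F)| = n, then there is a feasible maximal circuit walk from O to F of
length at most |supp(O) \ supp(F)| − 1. -/
theorem stmt_5 (n : ℕ) (hn : 0 < n) (u : Fin 2 → ℝ) (v : Fin n → ℝ)
    (hu : ∀ i, 0 < u i) (hv : ∀ j, 0 < v j) (huv : ∑ i, u i = ∑ j, v j)
    (O F : Matrix (Fin 2) (Fin n) ℝ)
    (hO : O ∈ Set.extremePoints ℝ (TP 2 n u v))
    (hF : F ∈ Set.extremePoints ℝ (TP 2 n u v))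
    (hOF : O ≠ F)
    (hsF : (suppF 2 n F).card = n) :
    ∃ k ≤ (suppF 2 n O \ suppF 2 n F).card - 1, ∃ y : ℕ → Matrix (Fin 2) (Fin n) ℝ,
      y 0 = O ∧ y k = F ∧ FMCircuitWalk 2 n u v k y :=
  stmt_5_general n u v hv O F hO hF hsF
end

section
/- For every 2×n transportation polytope P(u,v) (n ≥ 1, positive margins) and any two vertices O and F of P(u,v), there exists a feasible maximal circuit walk from O to F of length at most n − 1. In other words, the circuit diameter CD_fm of every 2×n transportation polytope is at most n − 1. -/
/-! A point of `TP 2 n u v` is determined by its first row. To walk towards a vertex `F`, take a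
column `j` whose first-row entry must grow and a column `k` whose entry must shrink, and move along
the circuit supported on columns `j, k` as far as feasibility allows. A vertex has at most one
column with both entries positive, so `j, k` can be chosen such that this maximal step makes column
`j` or `k` agree with `F`. The number of columns where the current point differs from `F` thus
drops at every step; it is never `1` (the row sums agree), so at most `n - 1` steps are needed. -/

open Finset Matrix

section

variable {m n : ℕ} {u : Fin m → ℝ} {v : Fin n → ℝ}

def IsMaxCircuitStep (m n : ℕ) (u : Fin m → ℝ) (v : Fin n → ℝ)
    (x x' : Matrix (Fin m) (Fin n) ℝ) : Prop :=
  ∃ g : Matrix (Fin m) (Fin n) ℝ, ∃ α : ℝ,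
    IsCircuit m n g ∧ 0 < α ∧ x' = x + α • g ∧
      ∀ β : ℝ, α < β → x + β • g ∉ TP m n u v

lemma FMCircuitWalk.const {x : Matrix (Fin m) (Fin n) ℝ} (hx : x ∈ TP m n u v) :
    FMCircuitWalk m n u v 0 fun _ => x :=
  ⟨fun _ _ => hx, fun _ hi => absurd hi (Nat.not_lt_zero _)⟩

lemma FMCircuitWalk.cons {k : ℕ} {x : Matrix (Fin m) (Fin n) ℝ}
    {w : ℕ → Matrix (Fin m) (Fin n) ℝ} (hx : x ∈ TP m n u v)
    (hxw : IsMaxCircuitStep m n u v x (w 0)) (hw : FMCircuitWalk m n u v k w) :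
    FMCircuitWalk m n u v (k + 1) (Stream'.cons x w) := by
  refine ⟨fun i hi => ?_, fun i hi => ?_⟩ <;> cases i
  · exact hx
  · exact hw.1 _ (by omega)
  · exact hxw
  · exact hw.2 _ (by omega)

lemma add_smul_mem_TP {y g : Matrix (Fin m) (Fin n) ℝ} {t : ℝ} (hy : y ∈ TP m n u v)
    (hrow : ∀ i, ∑ j, g i j = 0) (hcol : ∀ j, ∑ i, g i j = 0)
    (hnonneg : ∀ i j, 0 ≤ y i j + t * g i j) : y + t • g ∈ TP m n u v := by
  refine ⟨hnonneg, fun i => ?_, fun j => ?_⟩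
  · simp [sum_add_distrib, ← mul_sum, hrow, hy.2.1 i]
  · simp [sum_add_distrib, ← mul_sum, hcol, hy.2.2 j]

end

lemma card_filter_ne_ne_one {ι M : Type*} [Fintype ι] [AddCommGroup M] [DecidableEq M]
    {a b : ι → M} (h : ∑ i, a i = ∑ i, b i) : #{i | a i ≠ b i} ≠ 1 := by
  intro h1
  obtain ⟨s, hs⟩ := card_eq_one.1 h1
  have hmem : ∀ i, a i ≠ b i ↔ i = s := fun i => by simpa using Finset.ext_iff.1 hs i
  have : a s - b s = 0 := by
    rw [← Fintype.sum_eq_single s fun i hi => sub_eq_zero.2 (not_not.1 (mt (hmem i).1 hi)),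
      sum_sub_distrib, h, sub_self]
  exact (hmem s).2 rfl (sub_eq_zero.1 this)

lemma neg_le_of_sum_eq_zero {ι : Type*} [Fintype ι] [DecidableEq ι] {f : ι → ℝ}
    (hf : ∑ i, f i = 0) {s k : ι} (hks : k ≠ s) (hpos : ∀ i, 0 < f i → i = s) :
    -f k ≤ f s := by
  have hk : k ∈ univ.erase s := mem_erase.2 ⟨hks, mem_univ k⟩
  have hrest : ∑ i ∈ (univ.erase s).erase k, f i ≤ 0 :=
    sum_nonpos fun i hi => not_lt.1 fun h => (mem_erase.1 (mem_erase.1 hi).2).1 (hpos i h)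
  rw [← add_sum_erase _ _ (mem_univ s), ← add_sum_erase _ _ hk] at hf
  linarith

section TwoRows

variable {n : ℕ} {u : Fin 2 → ℝ} {v : Fin n → ℝ}

lemma TP.row_zero_add_row_one {y : Matrix (Fin 2) (Fin n) ℝ} (hy : y ∈ TP 2 n u v)
    (l : Fin n) : y 0 l + y 1 l = v l := by
  simpa [Fin.sum_univ_two] using hy.2.2 l

lemma TP.eq_of_row_zero_eq {y F : Matrix (Fin 2) (Fin n) ℝ} (hy : y ∈ TP 2 n u v)
    (hF : F ∈ TP 2 n u v) (h : ∀ l, y 0 l = F 0 l) : y = F := by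
  ext i l
  fin_cases i
  · exact h l
  · dsimp
    linarith [TP.row_zero_add_row_one hy l, TP.row_zero_add_row_one hF l, h l]

def elemCircuit (j k : Fin n) : Matrix (Fin 2) (Fin n) ℝ :=
  vecMulVec ![1, -1] (Pi.single j 1 - Pi.single k 1 : Fin n → ℝ)

lemma elemCircuit_apply (j k : Fin n) (i : Fin 2) (l : Fin n) :
    elemCircuit j k i l =
      ![1, -1] i * ((Pi.single j 1 : Fin n → ℝ) l - (Pi.single k 1 : Fin n → ℝ) l) :=
  rfl

lemma elemCircuit_swap (j k : Fin n) : elemCircuit k j = -elemCircuit j k := by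
  ext i l
  simp only [Matrix.neg_apply, elemCircuit_apply]
  ring

lemma elemCircuit_row_sum (j k : Fin n) (i : Fin 2) : ∑ l, elemCircuit j k i l = 0 := by
  simp [elemCircuit_apply, ← mul_sum, sum_sub_distrib]

lemma elemCircuit_col_sum (j k l : Fin n) : ∑ i, elemCircuit j k i l = 0 := by
  simp [elemCircuit_apply, Fin.sum_univ_two]

lemma elemCircuit_apply_ne_zero_iff {j k : Fin n} (hjk : j ≠ k) (i : Fin 2) (l : Fin n) :
    elemCircuit j k i l ≠ 0 ↔ l = j ∨ l = k := by
  fin_cases i <;> by_cases hj : l = j <;> by_cases hk : l = k <;>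
    simp_all [elemCircuit_apply]

lemma eq_smul_elemCircuit {j k : Fin n} (hjk : j ≠ k) {h : Matrix (Fin 2) (Fin n) ℝ}
    (hrow : ∀ i, ∑ l, h i l = 0) (hcol : ∀ l, ∑ i, h i l = 0)
    (hsupp : ∀ i l, h i l ≠ 0 → l = j ∨ l = k) : h = h 0 j • elemCircuit j k := by
  have hzero : ∀ i l, l ≠ j → l ≠ k → h i l = 0 := fun i l hj hk =>
    not_not.1 fun hne => (hsupp i l hne).elim hj hk
  have h1 : ∀ l, h 1 l = -h 0 l := fun l => by
    linarith [show h 0 l + h 1 l = 0 by simpa [Fin.sum_univ_two] using hcol l]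
  have h0k : h 0 k = -h 0 j := by
    linarith [(Fintype.sum_eq_add j k hjk fun l hl => hzero 0 l hl.1 hl.2).symm.trans (hrow 0)]
  ext i l
  fin_cases i <;> by_cases hj : l = j <;> by_cases hk : l = k <;>
    simp_all [elemCircuit_apply]

lemma isCircuit_elemCircuit {j k : Fin n} (hjk : j ≠ k) : IsCircuit 2 n (elemCircuit j k) := by
  refine ⟨fun h0 => ?_, elemCircuit_row_sum j k, elemCircuit_col_sum j k,
    fun h hne hrow hcol hsub => ?_⟩
  · simpa [h0] using (elemCircuit_apply_ne_zero_iff hjk 0 j).2 (Or.inl rfl)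
  · have hh := eq_smul_elemCircuit hjk hrow hcol fun i l hil =>
      (elemCircuit_apply_ne_zero_iff hjk i l).1 (@hsub (i, l) hil)
    have hc : h 0 j ≠ 0 := fun hc => hne (by rw [hh, hc, zero_smul])
    rw [hh]
    ext p
    simp [hc]

lemma add_smul_elemCircuit_mem_TP_iff {y : Matrix (Fin 2) (Fin n) ℝ} (hy : y ∈ TP 2 n u v)
    {j k : Fin n} (hjk : j ≠ k) {t : ℝ} (ht : 0 ≤ t) :
    y + t • elemCircuit j k ∈ TP 2 n u v ↔ t ≤ y 1 j ∧ t ≤ y 0 k := by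
  constructor
  · intro h
    have h1 := h.1 1 j
    have h2 := h.1 0 k
    simp [elemCircuit_apply, hjk, hjk.symm] at h1 h2
    constructor <;> linarith
  · rintro ⟨h1, h2⟩
    refine add_smul_mem_TP hy (elemCircuit_row_sum j k) (elemCircuit_col_sum j k) fun i l => ?_
    have := hy.1 i l
    fin_cases i <;> by_cases hj : l = j <;> by_cases hk : l = k <;>
      simp_all [elemCircuit_apply] <;> linarith

lemma eq_of_forall_pos_of_mem_extremePoints {F : Matrix (Fin 2) (Fin n) ℝ}
    (hF : F ∈ (TP 2 n u v).extremePoints ℝ) {j k : Fin n} (hj : ∀ i, 0 < F i j)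
    (hk : ∀ i, 0 < F i k) : j = k := by
  by_contra hjk
  set ε := min (min (F 0 j) (F 1 j)) (min (F 0 k) (F 1 k))
  have hε : 0 < ε := lt_min (lt_min (hj 0) (hj 1)) (lt_min (hk 0) (hk 1))
  have hε₁ : ε ≤ F 0 j ∧ ε ≤ F 1 j ∧ ε ≤ F 0 k ∧ ε ≤ F 1 k := by
    refine ⟨?_, ?_, ?_, ?_⟩ <;> simp [ε]
  have hplus := (add_smul_elemCircuit_mem_TP_iff hF.1 hjk hε.le).2 ⟨hε₁.2.1, hε₁.2.2.1⟩
  have hminus := (add_smul_elemCircuit_mem_TP_iff hF.1 (Ne.symm hjk) hε.le).2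
    ⟨hε₁.2.2.2, hε₁.1⟩
  have hmid : F ∈ openSegment ℝ (F + ε • elemCircuit j k) (F + ε • elemCircuit k j) :=
    ⟨1 / 2, 1 / 2, by norm_num, by norm_num, by norm_num, by rw [elemCircuit_swap]; module⟩
  have h0 := congrFun (congrFun (hF.2 hplus hminus hmid) 0) j
  simp [elemCircuit_apply, hε.ne', hjk] at h0

/-- For points of `TP 2 n u v` the first row determines the second, so these are the columns
in which `y` and `F` differ. -/
noncomputable def diffCols (y F : Matrix (Fin 2) (Fin n) ℝ) : Finset (Fin n) :=
  {l | y 0 l ≠ F 0 l}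

lemma card_diffCols_ne_one {y F : Matrix (Fin 2) (Fin n) ℝ} (hy : y ∈ TP 2 n u v)
    (hF : F ∈ TP 2 n u v) : #(diffCols y F) ≠ 1 :=
  card_filter_ne_ne_one (by rw [hy.2.1 0, hF.2.1 0])

lemma exists_tight_pair {y F : Matrix (Fin 2) (Fin n) ℝ} (hy : y ∈ TP 2 n u v)
    (hF : F ∈ TP 2 n u v) (hF₁ : ∀ j k, (∀ i, 0 < F i j) → (∀ i, 0 < F i k) → j = k)
    (hne : (diffCols y F).Nonempty) :
    ∃ j k, j ≠ k ∧ y 0 j < F 0 j ∧ F 0 k < y 0 k ∧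
      min (y 1 j) (y 0 k) = min (F 0 j - y 0 j) (y 0 k - F 0 k) := by
  have hsum : ∑ l, (y 0 l - F 0 l) = 0 := by rw [sum_sub_distrib, hy.2.1 0, hF.2.1 0, sub_self]
  have hsum' : ∑ l, (F 0 l - y 0 l) = 0 := by rw [sum_sub_distrib, hy.2.1 0, hF.2.1 0, sub_self]
  obtain ⟨l, hl⟩ := hne
  have hl' : y 0 l - F 0 l ≠ 0 := sub_ne_zero.2 (by simpa [diffCols] using hl)
  obtain ⟨s, -, hs⟩ := exists_pos_of_sum_zero_of_exists_nonzero _ hsum ⟨l, mem_univ l, hl'⟩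
  obtain ⟨r, -, hr⟩ := exists_pos_of_sum_zero_of_exists_nonzero _ hsum'
    ⟨l, mem_univ l, by rwa [← neg_sub, neg_ne_zero]⟩
  have hcol : ∀ l, y 1 l - F 1 l = F 0 l - y 0 l := fun l => by
    linarith [TP.row_zero_add_row_one hy l, TP.row_zero_add_row_one hF l]
  have hposJ : ∀ j, 0 < F 0 j - y 0 j → F 1 j ≠ 0 → ∀ i, 0 < F i j := fun j hj h1 =>
    Fin.forall_fin_two.2 ⟨by linarith [hy.1 0 j], (hF.1 1 j).lt_of_ne' h1⟩
  have hposK : ∀ k, 0 < y 0 k - F 0 k → F 0 k ≠ 0 → ∀ i, 0 < F i k := fun k hk h0 =>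
    Fin.forall_fin_two.2 ⟨(hF.1 0 k).lt_of_ne' h0, by linarith [hy.1 1 k, hcol k]⟩
  -- A column where `F` has a zero entry is tight: the maximal step on it lands on `F`. If one
  -- side has no tight column, that side is the single positive column and dominates the other.
  by_cases hJ : ∃ j, 0 < F 0 j - y 0 j ∧ F 1 j = 0
  · obtain ⟨j, hj, hFj⟩ := hJ
    have hyj : y 1 j = F 0 j - y 0 j := by rw [← hcol j, hFj, sub_zero]
    by_cases hK : ∃ k, 0 < y 0 k - F 0 k ∧ F 0 k = 0
    · obtain ⟨k, hk, hFk⟩ := hK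
      refine ⟨j, k, by rintro rfl; linarith, by linarith, by linarith, ?_⟩
      rw [hyj, hFk, sub_zero]
    · push Not at hK
      have hdom := neg_le_of_sum_eq_zero hsum (k := j) (s := s) (by rintro rfl; linarith)
        fun i hi => hF₁ i s (hposK i hi (hK i hi)) (hposK s hs (hK s hs))
      refine ⟨j, s, by rintro rfl; linarith, by linarith, by linarith, ?_⟩
      rw [min_eq_left (by linarith [hF.1 0 s]), min_eq_left (by linarith), hyj]
  · push Not at hJ
    have hFs : F 0 s = 0 := by
      by_contra h
      have := hF₁ s r (hposK s hs h) (hposJ r hr (hJ r hr))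
      subst this
      linarith
    have hdom := neg_le_of_sum_eq_zero hsum' (k := s) (s := r) (by rintro rfl; linarith)
      fun i hi => hF₁ i r (hposJ i hi (hJ i hi)) (hposJ r hr (hJ r hr))
    refine ⟨r, s, by rintro rfl; linarith, by linarith, by linarith, ?_⟩
    rw [min_eq_right (by linarith [hF.1 1 r, hcol r]), min_eq_right (by linarith), hFs, sub_zero]

lemma exists_maxCircuitStep {y F : Matrix (Fin 2) (Fin n) ℝ} (hy : y ∈ TP 2 n u v)
    {j k : Fin n} (hjk : j ≠ k) (hj : y 0 j < F 0 j) (hk : F 0 k < y 0 k)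
    (htight : min (y 1 j) (y 0 k) = min (F 0 j - y 0 j) (y 0 k - F 0 k)) :
    ∃ y', IsMaxCircuitStep 2 n u v y y' ∧ y' ∈ TP 2 n u v ∧
      #(diffCols y' F) < #(diffCols y F) := by
  set α := min (y 1 j) (y 0 k)
  have hα : 0 < α := htight ▸ lt_min (by linarith) (by linarith)
  have hrow (l : Fin n) : (y + α • elemCircuit j k) 0 l =
      y 0 l + α * ((Pi.single j 1 : Fin n → ℝ) l - (Pi.single k 1 : Fin n → ℝ) l) := by
    simp [elemCircuit_apply]
  refine ⟨y + α • elemCircuit j k,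
    ⟨_, α, isCircuit_elemCircuit hjk, hα, rfl, fun β hβ h => ?_⟩,
    (add_smul_elemCircuit_mem_TP_iff hy hjk hα.le).2 ⟨min_le_left _ _, min_le_right _ _⟩, ?_⟩
  · obtain ⟨h1, h2⟩ := (add_smul_elemCircuit_mem_TP_iff hy hjk (hα.le.trans hβ.le)).1 h
    exact hβ.not_ge (le_min h1 h2)
  obtain ⟨c, hc, hfix⟩ : ∃ c ∈ diffCols y F, (y + α • elemCircuit j k) 0 c = F 0 c := by
    rcases min_choice (F 0 j - y 0 j) (y 0 k - F 0 k) with h | h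
    · exact ⟨j, by simp [diffCols, hj.ne], by simp [hrow, hjk]; linarith⟩
    · exact ⟨k, by simp [diffCols, hk.ne'], by simp [hrow, hjk.symm]; linarith⟩
  refine (card_le_card fun l hl => ?_).trans_lt (card_erase_lt_of_mem hc)
  simp only [diffCols, mem_erase, mem_filter, mem_univ, true_and] at hl ⊢
  refine ⟨fun hlc => hl (hlc ▸ hfix), ?_⟩
  by_cases hlj : l = j
  · exact hlj ▸ hj.ne
  by_cases hlk : l = k
  · exact hlk ▸ hk.ne'
  simpa [hrow, hlj, hlk] using hl

theorem exists_FMCircuitWalk {F : Matrix (Fin 2) (Fin n) ℝ} (hF : F ∈ TP 2 n u v)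
    (hF₁ : ∀ j k, (∀ i, 0 < F i j) → (∀ i, 0 < F i k) → j = k)
    {y : Matrix (Fin 2) (Fin n) ℝ} (hy : y ∈ TP 2 n u v) :
    ∃ k ≤ #(diffCols y F) - 1, ∃ w : ℕ → Matrix (Fin 2) (Fin n) ℝ,
      w 0 = y ∧ w k = F ∧ FMCircuitWalk 2 n u v k w := by
  induction hc : #(diffCols y F) using Nat.strong_induction_on generalizing y with
  | _ c ih =>
    rcases (diffCols y F).eq_empty_or_nonempty with h | hne
    · obtain rfl := TP.eq_of_row_zero_eq hy hF fun l => by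
        simpa [diffCols] using Finset.ext_iff.1 h l
      exact ⟨0, Nat.zero_le _, fun _ => y, rfl, rfl, FMCircuitWalk.const hy⟩
    obtain ⟨j, k, hjk, hj, hk, htight⟩ := exists_tight_pair hy hF hF₁ hne
    obtain ⟨y', hstep, hy', hlt⟩ := exists_maxCircuitStep hy hjk hj hk htight
    obtain ⟨k', hk', w, rfl, hwk, hw⟩ := ih _ (hc ▸ hlt) hy' rfl
    have := card_diffCols_ne_one hy hF
    exact ⟨k' + 1, by omega, Stream'.cons y w, rfl, hwk, FMCircuitWalk.cons hy hstep hw⟩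

end TwoRows

theorem stmt_7_general (n : ℕ) (u : Fin 2 → ℝ) (v : Fin n → ℝ)
    (O F : Matrix (Fin 2) (Fin n) ℝ)
    (hO : O ∈ Set.extremePoints ℝ (TP 2 n u v))
    (hF : F ∈ Set.extremePoints ℝ (TP 2 n u v)) :
    ∃ k ≤ n - 1, ∃ y : ℕ → Matrix (Fin 2) (Fin n) ℝ,
      y 0 = O ∧ y k = F ∧ FMCircuitWalk 2 n u v k y := by
  obtain ⟨k, hk, w, hw0, hwk, hw⟩ :=
    exists_FMCircuitWalk hF.1 (fun _ _ => eq_of_forall_pos_of_mem_extremePoints hF) hO.1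
  have hcard : #(diffCols O F) ≤ n := (card_le_univ _).trans_eq (Fintype.card_fin n)
  exact ⟨k, by omega, w, hw0, hwk, hw⟩

/-- the circuit diameter CD_fm of every 2×n transportation polytope is at
most n − 1: between any two vertices there is a feasible maximal circuit walk of
length at most n − 1. -/
theorem stmt_7 (n : ℕ) (hn : 0 < n) (u : Fin 2 → ℝ) (v : Fin n → ℝ)
    (hu : ∀ i, 0 < u i) (hv : ∀ j, 0 < v j) (huv : ∑ i, u i = ∑ j, v j)
    (O F : Matrix (Fin 2) (Fin n) ℝ)
    (hO : O ∈ Set.extremePoints ℝ (TP 2 n u v))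
    (hF : F ∈ Set.extremePoints ℝ (TP 2 n u v)) :
    ∃ k ≤ n - 1, ∃ y : ℕ → Matrix (Fin 2) (Fin n) ℝ,
      y 0 = O ∧ y k = F ∧ FMCircuitWalk 2 n u v k y :=
  stmt_7_general n u v O F hO hF
end

section
/- Every 2×n transportation polytope P(u,v) with positive margins has graph diameter at most n: for any two vertices O and F of P(u,v) there is an edge walk from O to F of length at most n. -/
def AdjVert (m n : ℕ) (u : Fin m → ℝ) (v : Fin n → ℝ)
    (y z : Matrix (Fin m) (Fin n) ℝ) : Prop :=
  y ≠ z ∧ y ∈ Set.extremePoints ℝ (TP m n u v) ∧ z ∈ Set.extremePoints ℝ (TP m n u v) ∧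
    IsExtreme ℝ (TP m n u v) (segment ℝ y z)

/-!
A matrix of `TP 2 n u v` is determined by its first row `x`, which ranges over the slice
`0 ≤ x ≤ v`, `∑ x = u 0` of a box. The vertices are the points of the slice with at most one
fractional coordinate (strictly between its bounds), and two vertices are adjacent as soon as they
agree, at a bound, outside two columns.

To walk from `x` to `y`, shift mass from a column where `x` exceeds `y` to one where it falls short
until one of the two reaches a non-fractional value of `y`; that column is then settled for good.
Only when `x` and `y` share their fractional column while `x` has both a surplus and a deficit
elsewhere may a step settle nothing: it empties the shared column instead, and this configuration
never comes back. Since the last step settles two columns at once,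
`#unsettled - 1 + [two-sided] ≤ n` steps suffice.
-/
open Finset AffineMap

section FiniteSums

variable {ι : Type*} [Fintype ι] {x y : ι → ℝ}

theorem eq_of_sum_eq_of_forall_ne (hsum : ∑ j, x j = ∑ j, y j) {p : ι}
    (h : ∀ j ≠ p, x j = y j) : x = y := by
  classical
  funext j
  by_cases hj : j = p
  · subst hj
    have hrest : ∑ i ∈ univ.erase j, x i = ∑ i ∈ univ.erase j, y i :=
      sum_congr rfl fun i hi => h i (ne_of_mem_erase hi)
    linarith [sum_erase_add univ x (mem_univ j), sum_erase_add univ y (mem_univ j)]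
  · exact h j hj

theorem exists_lt_of_sum_eq (hsum : ∑ j, x j = ∑ j, y j) {b : ι} (hb : x b < y b) :
    ∃ a, y a < x a := by
  by_contra! h
  exact (sum_lt_sum (fun i _ => h i) ⟨b, mem_univ b, hb⟩).ne hsum

theorem sub_le_sub_of_sum_eq (hsum : ∑ j, x j = ∑ j, y j) {a b : ι} (hba : b ≠ a)
    (h : ∀ j ≠ a, x j ≤ y j) : y b - x b ≤ x a - y a := by
  classical
  have hzero : ∑ j, (y j - x j) = 0 := by rw [sum_sub_distrib, hsum, sub_self]
  have hb : y b - x b ≤ ∑ j ∈ univ.erase a, (y j - x j) :=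
    single_le_sum (f := fun j => y j - x j) (fun j hj => sub_nonneg.2 (h j (ne_of_mem_erase hj)))
      (mem_erase.2 ⟨hba, mem_univ b⟩)
  linarith [sum_erase_add univ (fun j => y j - x j) (mem_univ a)]

theorem eq_lineMap_of_eq_off_pair {z : ι → ℝ} (hy : ∑ j, y j = ∑ j, x j)
    (hz : ∑ j, z j = ∑ j, x j) {a b : ι} (hxa : x a ≠ z a)
    (hoff : ∀ j, j ≠ a → j ≠ b → y j = x j ∧ z j = x j) :
    y = lineMap x z ((y a - x a) / (z a - x a)) := by
  refine eq_of_sum_eq_of_forall_ne (p := b) ?_ fun j hjb => ?_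
  · simp only [lineMap_apply_module, Pi.add_apply, Pi.smul_apply, smul_eq_mul, sum_add_distrib,
      ← mul_sum, hy, hz]
    ring
  by_cases hja : j = a
  · subst hja
    simp only [lineMap_apply_module, Pi.add_apply, Pi.smul_apply, smul_eq_mul]
    field_simp [sub_ne_zero.2 hxa.symm]
    ring
  · simp only [lineMap_apply_module, Pi.add_apply, Pi.smul_apply, smul_eq_mul, (hoff j hja hjb).1,
      (hoff j hja hjb).2]
    ring

end FiniteSums

theorem lineMap_mem_segment_of_mem_extremePoints {E : Type*} [AddCommGroup E] [Module ℝ E]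
    {A : Set E} {x z : E}
    (hx : x ∈ A.extremePoints ℝ) (hz : z ∈ A.extremePoints ℝ) (hxz : x ≠ z) {t : ℝ}
    (ht : lineMap x z t ∈ A) : lineMap x z t ∈ segment ℝ x z := by
  -- outside `[0, 1]`, one endpoint would lie strictly between the other one and `lineMap x z t`
  rw [segment_eq_image_lineMap]
  refine ⟨t, ⟨?_, ?_⟩, rfl⟩
  · by_contra! h
    have hseg : x ∈ openSegment ℝ z (lineMap x z t) := by
      rw [openSegment_eq_image_lineMap]
      refine ⟨1 / (1 - t), ⟨by apply div_pos <;> linarith, by rw [div_lt_one] <;> linarith⟩, ?_⟩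
      simp only [lineMap_apply_module]
      have : 1 - t ≠ 0 := by linarith
      match_scalars <;> field_simp
      ring
    exact hxz (hx.2 hz.1 ht hseg).symm
  · by_contra! h
    have hseg : z ∈ openSegment ℝ x (lineMap x z t) := by
      rw [openSegment_eq_image_lineMap]
      refine ⟨1 / t, ⟨by apply div_pos <;> linarith, by rw [div_lt_one] <;> linarith⟩, ?_⟩
      simp only [lineMap_apply_module]
      have : t ≠ 0 := by linarith
      match_scalars <;> field_simp
      ring
    exact hxz (hz.2 hx.1 ht hseg)

theorem isExtreme_setOf_forall_eq_zero {m n : Type*} {C : Set (Matrix m n ℝ)}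
    (hC : ∀ M ∈ C, ∀ i j, 0 ≤ M i j) (Z : m → n → Prop) :
    IsExtreme ℝ C {M ∈ C | ∀ i j, Z i j → M i j = 0} := by
  refine ⟨fun M hM => hM.1, ?_⟩
  rintro M₁ hM₁ M₂ hM₂ M ⟨-, hMZ⟩ ⟨a, b, ha, hb, -, rfl⟩
  refine ⟨hM₁, fun i j hij => ?_⟩
  have h₁ := mul_nonneg ha.le (hC M₁ hM₁ i j)
  have h₂ := mul_nonneg hb.le (hC M₂ hM₂ i j)
  have hsum : a * M₁ i j + b * M₂ i j = 0 := by simpa using hMZ i j hij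
  exact (mul_eq_zero.1 ((add_eq_zero_iff_of_nonneg h₁ h₂).1 hsum).1).resolve_left ha.ne'

theorem convex_TP (m n : ℕ) (u : Fin m → ℝ) (v : Fin n → ℝ) : Convex ℝ (TP m n u v) := by
  rintro M ⟨hM, hMu, hMv⟩ N ⟨hN, hNu, hNv⟩ a b ha hb hab
  refine ⟨fun i j => ?_, fun i => ?_, fun j => ?_⟩
  · simp only [Matrix.add_apply, Matrix.smul_apply, smul_eq_mul]
    have := hM i j; have := hN i j
    positivity
  · simp only [Matrix.add_apply, Matrix.smul_apply, smul_eq_mul, sum_add_distrib, ← mul_sum,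
      hMu, hNu, ← add_mul, hab, one_mul]
  · simp only [Matrix.add_apply, Matrix.smul_apply, smul_eq_mul, sum_add_distrib, ← mul_sum,
      hMv, hNv, ← add_mul, hab, one_mul]

namespace TwoRowTransport

variable {n : ℕ} {v : Fin n → ℝ} {c δ : ℝ} {x y z : Fin n → ℝ} {a b j : Fin n}

def InSlice (v : Fin n → ℝ) (c : ℝ) (x : Fin n → ℝ) : Prop :=
  (∀ j, 0 ≤ x j ∧ x j ≤ v j) ∧ ∑ j, x j = c

def IsFrac (v x : Fin n → ℝ) (j : Fin n) : Prop :=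
  0 < x j ∧ x j < v j

def IsVertex (v : Fin n → ℝ) (c : ℝ) (x : Fin n → ℝ) : Prop :=
  InSlice v c x ∧ {j | IsFrac v x j}.Subsingleton

theorem InSlice.eq_zero_or_eq (hx : InSlice v c x) (h : ¬IsFrac v x j) : x j = 0 ∨ x j = v j := by
  rcases (hx.1 j).1.eq_or_lt with h0 | h0
  · exact Or.inl h0.symm
  · exact Or.inr (le_antisymm (hx.1 j).2 (not_lt.1 fun h1 => h ⟨h0, h1⟩))

theorem not_isFrac_of_eq (h : x j = y j) (hy : ¬IsFrac v y j) : ¬IsFrac v x j := by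
  rwa [IsFrac, h]

def transfer (x : Fin n → ℝ) (a b : Fin n) (δ : ℝ) : Fin n → ℝ :=
  x + δ • (Pi.single b 1 - Pi.single a 1)

theorem transfer_apply_left (hab : a ≠ b) : transfer x a b δ a = x a - δ := by
  simp [transfer, hab, sub_eq_add_neg]

theorem transfer_apply_right (hab : a ≠ b) : transfer x a b δ b = x b + δ := by
  simp [transfer, hab.symm]

theorem transfer_apply_of_ne (ha : j ≠ a) (hb : j ≠ b) : transfer x a b δ j = x j := by
  simp [transfer, ha, hb]

theorem sum_transfer : ∑ j, transfer x a b δ j = ∑ j, x j := by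
  simp [transfer, sum_add_distrib, ← mul_sum, sum_sub_distrib]

theorem isFrac_of_isFrac_transfer (h : IsFrac v (transfer x a b δ) j) :
    IsFrac v x j ∨ j = a ∨ j = b := by
  by_cases ha : j = a
  · exact Or.inr (Or.inl ha)
  by_cases hb : j = b
  · exact Or.inr (Or.inr hb)
  exact Or.inl (by rwa [IsFrac, ← transfer_apply_of_ne (x := x) (δ := δ) ha hb])

theorem InSlice.transfer (hx : InSlice v c x) (hab : a ≠ b) (hδ : 0 ≤ δ) (ha : δ ≤ x a)
    (hb : x b + δ ≤ v b) : InSlice v c (transfer x a b δ) := by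
  refine ⟨fun j => ?_, sum_transfer.trans hx.2⟩
  by_cases hja : j = a
  · subst hja
    rw [transfer_apply_left hab]
    constructor <;> linarith [(hx.1 j).2]
  by_cases hjb : j = b
  · subst hjb
    rw [transfer_apply_right hab]
    constructor <;> linarith [(hx.1 j).1]
  rw [transfer_apply_of_ne hja hjb]
  exact hx.1 j

theorem transfer_between (hab : a ≠ b) (hδ : 0 ≤ δ) (ha : δ ≤ x a - y a) (hb : δ ≤ y b - x b)
    (j : Fin n) :
    (y j < transfer x a b δ j → y j < x j) ∧ (transfer x a b δ j < y j → x j < y j) := by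
  by_cases hja : j = a
  · subst hja
    rw [transfer_apply_left hab]
    constructor <;> intro h <;> linarith
  by_cases hjb : j = b
  · subst hjb
    rw [transfer_apply_right hab]
    constructor <;> intro h <;> linarith
  rw [transfer_apply_of_ne hja hjb]
  exact ⟨id, id⟩

def moveGraph (v : Fin n → ℝ) (c : ℝ) : SimpleGraph (Fin n → ℝ) where
  Adj x z := x ≠ z ∧ IsVertex v c x ∧ IsVertex v c z ∧
    ∃ a b, ∀ j, j ≠ a → j ≠ b → x j = z j ∧ (x j = 0 ∨ x j = v j)
  symm := ⟨by
    rintro x z ⟨hne, hx, hz, a, b, h⟩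
    exact ⟨hne.symm, hz, hx, a, b, fun j ha hb => (h j ha hb).1 ▸ ⟨rfl, (h j ha hb).2⟩⟩⟩
  loopless := ⟨fun _ h => h.1 rfl⟩

theorem moveGraph_adj_transfer (hx : IsVertex v c x) (hab : a ≠ b) (hδ : 0 < δ) (ha : δ ≤ x a)
    (hb : x b + δ ≤ v b) (hfrac : ∀ j, IsFrac v x j → j = a ∨ j = b)
    (hbound : ¬IsFrac v (transfer x a b δ) a ∨ ¬IsFrac v (transfer x a b δ) b) :
    (moveGraph v c).Adj x (transfer x a b δ) := by
  have hz := hx.1.transfer hab hδ.le ha hb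
  have hzfrac : ∀ j, IsFrac v (transfer x a b δ) j → j = a ∨ j = b := fun j hj =>
    (isFrac_of_isFrac_transfer hj).elim (hfrac j) id
  refine ⟨fun h => ?_, hx, ⟨hz, fun j hj k hk => ?_⟩, a, b, fun j hja hjb => ?_⟩
  · have := congrFun h a
    rw [transfer_apply_left hab] at this
    linarith
  · rcases hbound with h | h <;> rcases hzfrac j hj with rfl | rfl <;>
      rcases hzfrac k hk with rfl | rfl <;> first | rfl | contradiction
  · exact ⟨(transfer_apply_of_ne hja hjb).symm,
      hx.1.eq_zero_or_eq fun h => (hfrac j h).elim hja hjb⟩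

open scoped Classical in
noncomputable def unsettled (v x y : Fin n → ℝ) : Finset (Fin n) :=
  {j | x j ≠ y j ∨ IsFrac v y j}

theorem mem_unsettled : j ∈ unsettled v x y ↔ x j ≠ y j ∨ IsFrac v y j := by
  simp [unsettled]

theorem unsettled_subset (hz : ∀ j, j ≠ a → j ≠ b → z j = x j) (ha : a ∈ unsettled v x y)
    (hb : b ∈ unsettled v x y) : unsettled v z y ⊆ unsettled v x y := by
  intro j hj
  by_cases hja : j = a
  · exact hja ▸ ha
  by_cases hjb : j = b
  · exact hjb ▸ hb
  rwa [mem_unsettled, ← hz j hja hjb, ← mem_unsettled]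

theorem card_unsettled_lt (hz : ∀ j, j ≠ a → j ≠ b → z j = x j) (ha : a ∈ unsettled v x y)
    (hb : b ∈ unsettled v x y) {w : Fin n} (hw : w ∈ unsettled v x y) (hzw : z w = y w)
    (hyw : ¬IsFrac v y w) : #(unsettled v z y) < #(unsettled v x y) := by
  refine card_lt_card ((ssubset_iff_of_subset (unsettled_subset hz ha hb)).2 ⟨w, hw, ?_⟩)
  simp [mem_unsettled, hzw, hyw]

theorem two_le_card_unsettled (hx : InSlice v c x) (hy : InSlice v c y) (hb : x b < y b) :
    2 ≤ #(unsettled v x y) := by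
  obtain ⟨a, ha⟩ := exists_lt_of_sum_eq (hx.2.trans hy.2.symm) hb
  refine one_lt_card.2 ⟨a, mem_unsettled.2 (Or.inl ha.ne'), b, mem_unsettled.2 (Or.inl hb.ne),
    fun h => ?_⟩
  subst h
  linarith

def TwoSided (v x y : Fin n → ℝ) : Prop :=
  ∃ p, IsFrac v x p ∧ IsFrac v y p ∧ (∃ a ≠ p, y a < x a) ∧ ∃ b ≠ p, x b < y b

open scoped Classical in
noncomputable def walkBound (v x y : Fin n → ℝ) : ℕ :=
  #(unsettled v x y) - 1 + if TwoSided v x y then 1 else 0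

theorem walkBound_lt (h2 : 2 ≤ #(unsettled v x y))
    (h : #(unsettled v z y) < #(unsettled v x y) ∧ (TwoSided v z y → TwoSided v x y) ∨
      #(unsettled v z y) ≤ #(unsettled v x y) ∧ TwoSided v x y ∧ ¬TwoSided v z y) :
    walkBound v z y < walkBound v x y := by
  unfold walkBound
  rcases h with ⟨hlt, himp⟩ | ⟨hle, hx, hz⟩
  · by_cases hz : TwoSided v z y
    · simp only [hz, himp hz, if_true]
      omega
    · by_cases hx : TwoSided v x y <;> simp only [hz, hx, if_true, if_false] <;> omega
  · simp only [hx, hz, if_true, if_false]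
    omega

theorem walkBound_le (hn : 0 < n) : walkBound v x y ≤ n := by
  have := card_le_univ (unsettled v x y)
  rw [Fintype.card_fin] at this
  unfold walkBound
  split_ifs <;> omega

theorem exists_adj_settle (hx : IsVertex v c x) (hy : IsVertex v c y) (ha : y a < x a)
    (hb : x b < y b) (hfrac : ∀ j, IsFrac v x j → j = a ∨ j = b)
    (hsettle : ¬IsFrac v y a ∧ x a - y a ≤ y b - x b ∨ ¬IsFrac v y b ∧ y b - x b ≤ x a - y a) :
    ∃ z, (moveGraph v c).Adj x z ∧ #(unsettled v z y) < #(unsettled v x y) ∧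
      (∀ j, IsFrac v z j → j = a ∨ j = b) ∧ (∀ j, y j < z j → y j < x j) ∧
      ∀ j, z j < y j → x j < y j := by
  have hab : a ≠ b := by
    rintro rfl
    linarith
  set δ := min (x a - y a) (y b - x b) with hδ
  have hδ0 : 0 < δ := lt_min (by linarith) (by linarith)
  have hδa : δ ≤ x a - y a := min_le_left _ _
  have hδb : δ ≤ y b - x b := min_le_right _ _
  have hza : transfer x a b δ a = x a - δ := transfer_apply_left hab
  have hzb : transfer x a b δ b = x b + δ := transfer_apply_right hab
  have hzj : ∀ j, j ≠ a → j ≠ b → transfer x a b δ j = x j := fun j => transfer_apply_of_ne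
  obtain ⟨w, hw, hzw, hyw⟩ :
      ∃ w, (w = a ∨ w = b) ∧ transfer x a b δ w = y w ∧ ¬IsFrac v y w := by
    rcases hsettle with ⟨hya, h⟩ | ⟨hyb, h⟩
    · exact ⟨a, Or.inl rfl, by rw [hza, hδ, min_eq_left h]; ring, hya⟩
    · exact ⟨b, Or.inr rfl, by rw [hzb, hδ, min_eq_right h]; ring, hyb⟩
  have hua : a ∈ unsettled v x y := mem_unsettled.2 (Or.inl ha.ne')
  have hub : b ∈ unsettled v x y := mem_unsettled.2 (Or.inl hb.ne)
  have hzw' : ¬IsFrac v (transfer x a b δ) w := not_isFrac_of_eq hzw hyw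
  have huw : w ∈ unsettled v x y := by
    rcases hw with rfl | rfl
    exacts [hua, hub]
  refine ⟨transfer x a b δ,
    moveGraph_adj_transfer hx hab hδ0
      (by linarith [(hy.1.1 a).1]) (by linarith [(hy.1.1 b).2]) hfrac
      (by rcases hw with rfl | rfl; exacts [Or.inl hzw', Or.inr hzw']),
    card_unsettled_lt hzj hua hub huw hzw hyw,
    fun j hj => (isFrac_of_isFrac_transfer hj).elim (hfrac j) id,
    fun j => (transfer_between hab hδ0.le hδa hδb j).1,
    fun j => (transfer_between hab hδ0.le hδa hδb j).2⟩

theorem exists_adj_of_common_isFrac {p : Fin n} (hx : IsVertex v c x) (hy : IsVertex v c y)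
    (hxp : IsFrac v x p) (hyp : IsFrac v y p) (hbp : b ≠ p) (hb : x b < y b) :
    ∃ z, (moveGraph v c).Adj x z ∧ (#(unsettled v z y) < #(unsettled v x y) ∨
      #(unsettled v z y) ≤ #(unsettled v x y) ∧ ¬TwoSided v z y) := by
  have hxb : x b = 0 := (hx.1.eq_zero_or_eq fun h => hbp (hx.2 h hxp)).resolve_right
    (by linarith [(hy.1.1 b).2])
  have hyb : y b = v b := (hy.1.eq_zero_or_eq fun h => hbp (hy.2 h hyp)).resolve_left
    (by linarith [(hx.1.1 b).1])
  set δ := min (x p) (v b) with hδ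
  have hzp : transfer x p b δ p = x p - δ := transfer_apply_left hbp.symm
  have hzb : transfer x p b δ b = δ := by rw [transfer_apply_right hbp.symm, hxb, zero_add]
  have hzj : ∀ j, j ≠ p → j ≠ b → transfer x p b δ j = x j := fun j => transfer_apply_of_ne
  have hyb' : ¬IsFrac v y b := fun h => h.2.ne hyb
  have hup : p ∈ unsettled v x y := mem_unsettled.2 (Or.inr hyp)
  have hub : b ∈ unsettled v x y := mem_unsettled.2 (Or.inl hb.ne)
  have hvb : 0 < v b := by linarith [(hy.1.1 b).2]
  have hadj := moveGraph_adj_transfer (c := c) hx hbp.symm (lt_min hxp.1 hvb)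
    (min_le_left _ _) (by rw [hxb, zero_add]; exact min_le_right _ _)
    (fun j hj => Or.inl (hx.2 hj hxp)) (by
      rcases le_total (x p) (v b) with h | h
      · left; rw [IsFrac, hzp, hδ, min_eq_left h, sub_self]; exact fun h => h.1.false
      · right; rw [IsFrac, hzb, hδ, min_eq_right h]; exact fun h => h.2.false)
  refine ⟨_, hadj, ?_⟩
  -- either `b` is filled up to `v b = y b`, or the shared column `p` is emptied
  rcases le_or_gt (v b) (x p) with h | h
  · left
    exact card_unsettled_lt hzj hup hub hub (by rw [hzb, hδ, min_eq_right h, hyb]) hyb'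
  · right
    refine ⟨card_le_card (unsettled_subset hzj hup hub), ?_⟩
    rintro ⟨q, hzq, hyq, -⟩
    have hq : q = p ∨ q = b := by
      rcases isFrac_of_isFrac_transfer hzq with hxq | hq | hq
      exacts [Or.inl (hx.2 hxq hxp), Or.inl hq, Or.inr hq]
    rcases hq with rfl | rfl
    · rw [IsFrac, hzp, hδ, min_eq_left h.le, sub_self] at hzq; exact hzq.1.false
    · exact hyb' hyq

theorem exists_adj_walkBound_lt_of_deficit (hx : IsVertex v c x) (hy : IsVertex v c y)
    (hb : x b < y b) (hyb : ¬IsFrac v y b) (hfrac : ∀ j, IsFrac v x j → j = b ∨ IsFrac v y j) :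
    ∃ z, (moveGraph v c).Adj x z ∧ walkBound v z y < walkBound v x y := by
  have h2 := two_le_card_unsettled hx.1 hy.1 hb
  by_cases hS : ∀ j, y j < x j → IsFrac v y j
  · -- all surplus sits in the fractional column `a` of `y`, so it can fill `b` completely
    obtain ⟨a, ha⟩ := exists_lt_of_sum_eq (hx.1.2.trans hy.1.2.symm) hb
    have hfa : ∀ j, IsFrac v y j → j = a := fun j hj => hy.2 hj (hS a ha)
    have hba : b ≠ a := fun h => hyb (h ▸ hS a ha)
    obtain ⟨z, hxz, hcard, -, hzS, -⟩ := exists_adj_settle hx hy ha hb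
      (fun j hj => (hfrac j hj).symm.imp (hfa j) id)
      (Or.inr ⟨hyb, sub_le_sub_of_sum_eq (hx.1.2.trans hy.1.2.symm) hba
        fun j hj => not_lt.1 fun h => hj (hfa j (hS j h))⟩)
    refine ⟨z, hxz, walkBound_lt h2 (Or.inl ⟨hcard, ?_⟩)⟩
    rintro ⟨p, -, hyp, ⟨a', ha'p, ha'⟩, -⟩
    exact absurd ((hfa a' (hS a' (hzS a' ha'))).trans (hfa p hyp).symm) ha'p
  push Not at hS
  obtain ⟨a, ha, hya⟩ := hS
  by_cases hfx : ∀ j, IsFrac v x j → j = a ∨ j = b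
  · obtain ⟨z, hxz, hcard, hzfrac, -⟩ := exists_adj_settle hx hy ha hb hfx
      ((le_total (x a - y a) (y b - x b)).imp (⟨hya, ·⟩) (⟨hyb, ·⟩))
    refine ⟨z, hxz, walkBound_lt h2 (Or.inl ⟨hcard, ?_⟩)⟩
    rintro ⟨p, hzp, hyp, -⟩
    rcases hzfrac p hzp with rfl | rfl <;> contradiction
  push Not at hfx
  obtain ⟨p, hxp, hpa, hpb⟩ := hfx
  have hyp := (hfrac p hxp).resolve_left hpb
  have htwo : TwoSided v x y := ⟨p, hxp, hyp, ⟨a, Ne.symm hpa, ha⟩, b, Ne.symm hpb, hb⟩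
  obtain ⟨z, hxz, hz⟩ := exists_adj_of_common_isFrac hx hy hxp hyp (Ne.symm hpb) hb
  exact ⟨z, hxz, walkBound_lt h2 (hz.imp (⟨·, fun _ => htwo⟩) fun h => ⟨h.1, htwo, h.2⟩)⟩

theorem exists_adj_walkBound_lt_of_surplus (hx : IsVertex v c x) (hy : IsVertex v c y)
    (ha : y a < x a) (hya : ¬IsFrac v y a) (hfrac : ∀ j, IsFrac v x j → j = a ∨ IsFrac v y j) :
    ∃ z, (moveGraph v c).Adj x z ∧ walkBound v z y < walkBound v x y := by
  obtain ⟨b, hb⟩ := exists_lt_of_sum_eq (hy.1.2.trans hx.1.2.symm) ha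
  have h2 := two_le_card_unsettled hx.1 hy.1 hb
  by_cases hT : ∀ j, x j < y j → IsFrac v y j
  · -- all deficit sits in the fractional column `b` of `y`, so it can absorb `a` completely
    have hfb : ∀ j, IsFrac v y j → j = b := fun j hj => hy.2 hj (hT b hb)
    have hab : a ≠ b := fun h => hya (h ▸ hT b hb)
    obtain ⟨z, hxz, hcard, -, -, hzT⟩ := exists_adj_settle hx hy ha hb
      (fun j hj => (hfrac j hj).imp id (hfb j))
      (Or.inl ⟨hya, sub_le_sub_of_sum_eq (hy.1.2.trans hx.1.2.symm) hab
        fun j hj => not_lt.1 fun h => hj (hfb j (hT j h))⟩)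
    refine ⟨z, hxz, walkBound_lt h2 (Or.inl ⟨hcard, ?_⟩)⟩
    rintro ⟨p, -, hyp, -, b', hb'p, hb'⟩
    exact absurd ((hfb b' (hT b' (hzT b' hb'))).trans (hfb p hyp).symm) hb'p
  push Not at hT
  obtain ⟨b, hb, hyb⟩ := hT
  by_cases hfx : ∀ j, IsFrac v x j → j = a ∨ j = b
  · obtain ⟨z, hxz, hcard, hzfrac, -⟩ := exists_adj_settle hx hy ha hb hfx
      ((le_total (x a - y a) (y b - x b)).imp (⟨hya, ·⟩) (⟨hyb, ·⟩))
    refine ⟨z, hxz, walkBound_lt h2 (Or.inl ⟨hcard, ?_⟩)⟩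
    rintro ⟨p, hzp, hyp, -⟩
    rcases hzfrac p hzp with rfl | rfl <;> contradiction
  push Not at hfx
  obtain ⟨p, hxp, hpa, hpb⟩ := hfx
  have hyp := (hfrac p hxp).resolve_left hpa
  have htwo : TwoSided v x y := ⟨p, hxp, hyp, ⟨a, Ne.symm hpa, ha⟩, b, Ne.symm hpb, hb⟩
  obtain ⟨z, hxz, hz⟩ := exists_adj_of_common_isFrac hx hy hxp hyp (Ne.symm hpb) hb
  exact ⟨z, hxz, walkBound_lt h2 (hz.imp (⟨·, fun _ => htwo⟩) fun h => ⟨h.1, htwo, h.2⟩)⟩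

theorem exists_adj_walkBound_lt (hx : IsVertex v c x) (hy : IsVertex v c y) (hne : x ≠ y) :
    ∃ z, (moveGraph v c).Adj x z ∧ walkBound v z y < walkBound v x y := by
  by_cases hg : ∃ g, IsFrac v x g ∧ ¬IsFrac v y g
  · obtain ⟨g, hxg, hyg⟩ := hg
    have hfrac : ∀ j, IsFrac v x j → j = g ∨ IsFrac v y j := fun j hj => Or.inl (hx.2 hj hxg)
    rcases lt_or_gt_of_ne (fun h => not_isFrac_of_eq h hyg hxg : x g ≠ y g) with h | h
    exacts [exists_adj_walkBound_lt_of_deficit hx hy h hyg hfrac,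
      exists_adj_walkBound_lt_of_surplus hx hy h hyg hfrac]
  push Not at hg
  obtain ⟨j, hj⟩ := Function.ne_iff.1 hne
  obtain ⟨a, b, ha, hb⟩ : ∃ a b, y a < x a ∧ x b < y b := by
    rcases lt_or_gt_of_ne hj with h | h
    · obtain ⟨a, ha⟩ := exists_lt_of_sum_eq (hx.1.2.trans hy.1.2.symm) h
      exact ⟨a, j, ha, h⟩
    · obtain ⟨b, hb⟩ := exists_lt_of_sum_eq (hy.1.2.trans hx.1.2.symm) h
      exact ⟨j, b, h, hb⟩
  by_cases hyb : IsFrac v y b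
  · have hya : ¬IsFrac v y a := fun hya => by
      have := hy.2 hya hyb
      subst this
      linarith
    exact exists_adj_walkBound_lt_of_surplus hx hy ha hya fun j hj => Or.inr (hg j hj)
  · exact exists_adj_walkBound_lt_of_deficit hx hy hb hyb fun j hj => Or.inr (hg j hj)

theorem exists_walk_length_le_walkBound (hx : IsVertex v c x) (hy : IsVertex v c y) :
    ∃ p : (moveGraph v c).Walk x y, p.length ≤ walkBound v x y := by
  induction h : walkBound v x y using Nat.strong_induction_on generalizing x with
  | _ k ih =>
  by_cases hxy : x = y
  · subst hxy
    exact ⟨.nil, by simp⟩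
  obtain ⟨z, hxz, hlt⟩ := exists_adj_walkBound_lt hx hy hxy
  obtain ⟨p, hp⟩ := ih _ (h ▸ hlt) hxz.2.2.1 rfl
  exact ⟨.cons hxz p, by simp only [SimpleGraph.Walk.length_cons]; omega⟩

variable {u : Fin 2 → ℝ} {M : Matrix (Fin 2) (Fin n) ℝ}

def toMatrix (v x : Fin n → ℝ) : Matrix (Fin 2) (Fin n) ℝ :=
  Matrix.of ![x, v - x]

@[simp]
theorem toMatrix_apply_zero : toMatrix v x 0 j = x j := rfl

@[simp]
theorem toMatrix_apply_one : toMatrix v x 1 j = v j - x j := rfl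

theorem toMatrix_injective : Function.Injective (toMatrix v) := fun x z h =>
  funext fun j => by simpa using congrFun (congrFun h 0) j

theorem toMatrix_lineMap {t : ℝ} :
    toMatrix v (lineMap x z t) = lineMap (toMatrix v x) (toMatrix v z) t := by
  ext i j
  fin_cases i
  · simp [lineMap_apply_module]
  · simp [lineMap_apply_module]
    ring

theorem toMatrix_mem_TP (huv : ∑ i, u i = ∑ j, v j) (hx : InSlice v (u 0) x) :
    toMatrix v x ∈ TP 2 n u v := by
  refine ⟨fun i j => ?_, fun i => ?_, fun j => by simp⟩
  · fin_cases i
    · simpa using (hx.1 j).1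
    · simpa using (hx.1 j).2
  · fin_cases i
    · simpa using hx.2
    · simp only [Fin.sum_univ_two] at huv
      simp [sum_sub_distrib, hx.2, ← huv]

theorem toMatrix_row_zero (hM : M ∈ TP 2 n u v) : toMatrix v (M 0) = M := by
  ext i j
  have hcol := hM.2.2 j
  rw [Fin.sum_univ_two] at hcol
  fin_cases i
  · rfl
  · simp [← hcol]

theorem inSlice_row_zero (hM : M ∈ TP 2 n u v) : InSlice v (u 0) (M 0) := by
  refine ⟨fun j => ⟨hM.1 0 j, ?_⟩, hM.2.1 0⟩
  have hcol := hM.2.2 j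
  rw [Fin.sum_univ_two] at hcol
  linarith [hM.1 1 j]

theorem row_zero_eq_of_zero_pattern (hM : M ∈ TP 2 n u v)
    (hzero : ∀ i, toMatrix v x i j = 0 → M i j = 0) (hxj : x j = 0 ∨ x j = v j) : M 0 j = x j := by
  rcases hxj with h | h
  · rw [h]
    exact hzero 0 (by simp [h])
  · have h1 := hzero 1 (by simp [h])
    have hcol := hM.2.2 j
    rw [Fin.sum_univ_two] at hcol
    linarith

theorem toMatrix_mem_extremePoints (huv : ∑ i, u i = ∑ j, v j) (hx : IsVertex v (u 0) x) :
    toMatrix v x ∈ (TP 2 n u v).extremePoints ℝ := by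
  rw [← isExtreme_singleton]
  convert isExtreme_setOf_forall_eq_zero (C := TP 2 n u v) (fun M hM => hM.1)
    fun i j => toMatrix v x i j = 0
  ext M
  constructor
  · rintro rfl
    exact ⟨toMatrix_mem_TP huv hx.1, fun i j h => h⟩
  rintro ⟨hM, hzero⟩
  have hrow : ∀ j, ¬IsFrac v x j → M 0 j = x j := fun j hj =>
    row_zero_eq_of_zero_pattern hM (hzero · j) (hx.1.eq_zero_or_eq hj)
  rw [Set.mem_singleton_iff, ← toMatrix_row_zero hM]
  congr 1
  by_cases hp : ∃ p, IsFrac v x p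
  · obtain ⟨p, hp⟩ := hp
    exact eq_of_sum_eq_of_forall_ne ((inSlice_row_zero hM).2.trans hx.1.2.symm)
      fun j hj => hrow j fun h => hj (hx.2 h hp)
  · push Not at hp
    exact funext fun j => hrow j (hp j)

theorem isVertex_row_zero (huv : ∑ i, u i = ∑ j, v j)
    (hM : M ∈ (TP 2 n u v).extremePoints ℝ) : IsVertex v (u 0) (M 0) := by
  set x := M 0
  have hx : InSlice v (u 0) x := inSlice_row_zero hM.1
  refine ⟨hx, fun j hj k hk => ?_⟩
  by_contra hjk
  set ε := min (min (x j) (v j - x j)) (min (x k) (v k - x k))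
  have hε : 0 < ε := lt_min (lt_min hj.1 (sub_pos.2 hj.2)) (lt_min hk.1 (sub_pos.2 hk.2))
  have hεj : ε ≤ x j := (min_le_left _ _).trans (min_le_left _ _)
  have hεj' : ε ≤ v j - x j := (min_le_left _ _).trans (min_le_right _ _)
  have hεk : ε ≤ x k := (min_le_right _ _).trans (min_le_left _ _)
  have hεk' : ε ≤ v k - x k := (min_le_right _ _).trans (min_le_right _ _)
  have h₁ := hx.transfer hjk hε.le hεj (by linarith)
  have h₂ := hx.transfer (Ne.symm hjk) hε.le hεk (by linarith)
  have hmid : lineMap (transfer x j k ε) (transfer x k j ε) (1 / 2 : ℝ) = x := by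
    ext i
    simp only [transfer, lineMap_apply_module, Pi.add_apply, Pi.smul_apply, Pi.sub_apply,
      smul_eq_mul]
    ring
  have hseg : M ∈ openSegment ℝ (toMatrix v (transfer x j k ε))
      (toMatrix v (transfer x k j ε)) := by
    rw [openSegment_eq_image_lineMap]
    exact ⟨1 / 2, ⟨by norm_num, by norm_num⟩,
      by rw [← toMatrix_lineMap, hmid, toMatrix_row_zero hM.1]⟩
  have := congrFun (congrFun (hM.2 (toMatrix_mem_TP huv h₁) (toMatrix_mem_TP huv h₂) hseg) 0) j
  rw [toMatrix_apply_zero, transfer_apply_left hjk] at this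
  linarith

theorem segment_eq_setOf_zero_pattern (huv : ∑ i, u i = ∑ j, v j)
    (h : (moveGraph v (u 0)).Adj x z) {a b : Fin n}
    (hoff : ∀ j, j ≠ a → j ≠ b → x j = z j ∧ (x j = 0 ∨ x j = v j)) :
    segment ℝ (toMatrix v x) (toMatrix v z) =
      {M ∈ TP 2 n u v | ∀ i j, (j ≠ a ∧ j ≠ b ∧ toMatrix v x i j = 0) → M i j = 0} := by
  have hX := toMatrix_mem_extremePoints huv h.2.1
  have hZ := toMatrix_mem_extremePoints huv h.2.2.1
  apply Set.Subset.antisymm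
  · intro M hM
    refine ⟨(convex_TP 2 n u v).segment_subset hX.1 hZ.1 hM, ?_⟩
    rintro i j ⟨hja, hjb, hxij⟩
    have hzij : toMatrix v z i j = 0 := by
      fin_cases i <;> simpa [← (hoff j hja hjb).1] using hxij
    obtain ⟨s, t, -, -, -, rfl⟩ := hM
    simp [hxij, hzij]
  rintro M ⟨hM, hzero⟩
  have hsum : ∑ j, x j = ∑ j, z j := h.2.1.1.2.trans h.2.2.1.1.2.symm
  have hxa : x a ≠ z a := fun hxza => h.1 <| eq_of_sum_eq_of_forall_ne hsum (p := b)
    fun j hjb => if hja : j = a then hja ▸ hxza else (hoff j hja hjb).1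
  have hrow := eq_lineMap_of_eq_off_pair ((inSlice_row_zero hM).2.trans h.2.1.1.2.symm) hsum.symm
    hxa fun j hja hjb => ⟨row_zero_eq_of_zero_pattern hM (fun i hi => hzero i j ⟨hja, hjb, hi⟩)
      (hoff j hja hjb).2, (hoff j hja hjb).1.symm⟩
  set t := (M 0 a - x a) / (z a - x a)
  have hMt : lineMap (toMatrix v x) (toMatrix v z) t = M := by
    rw [← toMatrix_lineMap, ← hrow, toMatrix_row_zero hM]
  rw [← hMt] at hM ⊢
  exact lineMap_mem_segment_of_mem_extremePoints hX hZ (toMatrix_injective.ne h.1) hM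

theorem adjVert_toMatrix (huv : ∑ i, u i = ∑ j, v j) (h : (moveGraph v (u 0)).Adj x z) :
    AdjVert 2 n u v (toMatrix v x) (toMatrix v z) := by
  obtain ⟨a, b, hoff⟩ := h.2.2.2
  refine ⟨toMatrix_injective.ne h.1, toMatrix_mem_extremePoints huv h.2.1,
    toMatrix_mem_extremePoints huv h.2.2.1, ?_⟩
  rw [segment_eq_setOf_zero_pattern huv h hoff]
  exact isExtreme_setOf_forall_eq_zero (fun M hM => hM.1) _

end TwoRowTransport

open TwoRowTransport in
theorem stmt_10_general (n : ℕ) (hn : 0 < n) (u : Fin 2 → ℝ) (v : Fin n → ℝ)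
    (huv : ∑ i, u i = ∑ j, v j)
    (O F : Matrix (Fin 2) (Fin n) ℝ)
    (hO : O ∈ Set.extremePoints ℝ (TP 2 n u v))
    (hF : F ∈ Set.extremePoints ℝ (TP 2 n u v)) :
    ∃ k ≤ n, ∃ w : ℕ → Matrix (Fin 2) (Fin n) ℝ,
      w 0 = O ∧ w k = F ∧ ∀ i < k, AdjVert 2 n u v (w i) (w (i + 1)) := by
  obtain ⟨p, hp⟩ := exists_walk_length_le_walkBound (isVertex_row_zero huv hO)
    (isVertex_row_zero huv hF)
  refine ⟨p.length, hp.trans (walkBound_le hn), fun i => toMatrix v (p.getVert i), ?_, ?_,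
    fun i hi => adjVert_toMatrix huv (p.adj_getVert_succ hi)⟩
  · exact (congrArg (toMatrix v) p.getVert_zero).trans (toMatrix_row_zero hO.1)
  · exact (congrArg (toMatrix v) p.getVert_length).trans (toMatrix_row_zero hF.1)

/-- every 2×n transportation polytope with positive margins has graph
diameter at most n: any two vertices are joined by an edge walk of length at most n. -/
theorem stmt_10 (n : ℕ) (hn : 0 < n) (u : Fin 2 → ℝ) (v : Fin n → ℝ)
    (hu : ∀ i, 0 < u i) (hv : ∀ j, 0 < v j) (huv : ∑ i, u i = ∑ j, v j)
    (O F : Matrix (Fin 2) (Fin n) ℝ)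
    (hO : O ∈ Set.extremePoints ℝ (TP 2 n u v))
    (hF : F ∈ Set.extremePoints ℝ (TP 2 n u v)) :
    ∃ k ≤ n, ∃ w : ℕ → Matrix (Fin 2) (Fin n) ℝ,
      w 0 = O ∧ w k = F ∧ ∀ i < k, AdjVert 2 n u v (w i) (w (i + 1)) :=
  stmt_10_general n hn u v huv O F hO hF
end
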